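/- arXiv:1904.03126 — 6 statements merged into one kernel-verified Lean document; each statement's English description precedes it below -/
import Mathlib

section
/- Let k be a nonarchimedean normed field and let p be a prime number with ‖(p : k)‖ = 1/p. If ξ and ξ' are two distinct p-th roots of unity in k (i.e. ξ^p = 1, ξ'^p = 1 and ξ ≠ ξ'), then ‖ξ − ξ'‖ = p^(−1/(p−1)). -/
/-!
Dividing by `ξ'` reduces to `‖1 - ζ‖` for a primitive `p`-th root of unity `ζ`. In an
ultrametric field all primitive `n`-th roots `μ = ζ ^ i` have the same `‖1 - μ‖`, because
`1 - ζ ^ i = (1 - ζ) * (1 + ζ + ⋯ + ζ ^ (i - 1))` and the geometric sum has norm at most `1`.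
Evaluating `Φₙ = ∏ (X - μ)` at `1` then gives `‖1 - ζ‖ ^ φ(n) = ‖Φₙ(1)‖`, which for `n = p`
is `‖p‖ = 1 / p`.
-/

open Finset Polynomial

lemma Real.eq_rpow_neg_one_div_of_pow_eq_inv {r a : ℝ} {n : ℕ} (hr : 0 ≤ r) (ha : 0 ≤ a)
    (hn : n ≠ 0) (h : r ^ n = a⁻¹) : r = a ^ (-1 / n : ℝ) := by
  rw [← Real.pow_rpow_inv_natCast hr hn, h, Real.inv_rpow ha, ← Real.rpow_neg ha, neg_div,
    one_div]

section Ultrametric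

variable {K : Type*} [NormedField K] [IsUltrametricDist K]

lemma norm_one_sub_pow_le_norm_one_sub {ζ : K} (hζ : ‖ζ‖ ≤ 1) (i : ℕ) :
    ‖1 - ζ ^ i‖ ≤ ‖1 - ζ‖ := by
  have hgeom : ‖∑ j ∈ range i, ζ ^ j‖ ≤ 1 :=
    IsUltrametricDist.norm_sum_le_of_forall_le_of_nonneg zero_le_one fun j _ ↦ by
      rw [norm_pow]
      exact pow_le_one₀ (norm_nonneg ζ) hζ
  rw [← mul_neg_geom_sum, norm_mul]
  exact mul_le_of_le_one_right (norm_nonneg _) hgeom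

namespace IsPrimitiveRoot

variable {n : ℕ} [NeZero n] {ζ : K}

lemma norm_one_sub_le {μ : K} (hζ : IsPrimitiveRoot ζ n) (hμ : μ ^ n = 1) :
    ‖1 - μ‖ ≤ ‖1 - ζ‖ := by
  obtain ⟨i, -, rfl⟩ := hζ.eq_pow_of_pow_eq_one hμ
  exact norm_one_sub_pow_le_norm_one_sub (hζ.isOfFinOrder (NeZero.ne n)).norm_eq_one.le i

lemma norm_one_sub_eq {μ : K} (hζ : IsPrimitiveRoot ζ n) (hμ : IsPrimitiveRoot μ n) :
    ‖1 - μ‖ = ‖1 - ζ‖ :=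
  (hζ.norm_one_sub_le hμ.pow_eq_one).antisymm (hμ.norm_one_sub_le hζ.pow_eq_one)

lemma norm_one_sub_pow_totient (hζ : IsPrimitiveRoot ζ n) :
    ‖1 - ζ‖ ^ n.totient = ‖(cyclotomic n K).eval 1‖ := by
  rw [cyclotomic_eq_prod_X_sub_primitiveRoots hζ, eval_prod, norm_prod,
    ← hζ.card_primitiveRoots, ← prod_const]
  refine prod_congr rfl fun μ hμ ↦ ?_
  rw [eval_sub, eval_X, eval_C]
  exact (hζ.norm_one_sub_eq ((mem_primitiveRoots (NeZero.pos n)).1 hμ)).symm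

lemma norm_one_sub_pow_pred_of_prime {p : ℕ} [Fact p.Prime] (hζ : IsPrimitiveRoot ζ p) :
    ‖1 - ζ‖ ^ (p - 1) = ‖(p : K)‖ := by
  rw [← Nat.totient_prime Fact.out, hζ.norm_one_sub_pow_totient, eval_one_cyclotomic_prime]

end IsPrimitiveRoot

end Ultrametric

/-- **Distance between distinct p-th roots of unity.**
Let `k` be a nonarchimedean normed field and `p` a prime with `‖(p : k)‖ = 1/p`.
If `ξ` and `ξ'` are two distinct `p`-th roots of unity in `k`, then
`‖ξ - ξ'‖ = p ^ (-1/(p-1))`. -/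
theorem dist_of_distinct_pth_roots_of_unity
    {k : Type*} [NormedField k]
    (hna : ∀ x y : k, ‖x + y‖ ≤ max ‖x‖ ‖y‖)
    (p : ℕ) (hp : p.Prime) (hpnorm : ‖(p : k)‖ = 1 / p)
    (ξ ξ' : k) (hξ : ξ ^ p = 1) (hξ' : ξ' ^ p = 1) (hne : ξ ≠ ξ') :
    ‖ξ - ξ'‖ = (p : ℝ) ^ (-(1 : ℝ) / ((p : ℝ) - 1)) := by
  have := IsUltrametricDist.isUltrametricDist_of_forall_norm_add_le_max_norm hna
  have := Fact.mk hp
  have hξ'0 : ξ' ≠ 0 := by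
    rintro rfl
    simp [hp.ne_zero] at hξ'
  have hζ : IsPrimitiveRoot (ξ / ξ') p :=
    isPrimitiveRoot_of_mem_nthRootsFinset hp
      ((mem_nthRootsFinset hp.pos 1).2 (by rw [div_pow, hξ, hξ', div_one]))
      (div_ne_one_of_ne hne)
  have hnorm : ‖ξ - ξ'‖ = ‖1 - ξ / ξ'‖ := by
    rw [one_sub_div hξ'0, norm_div, norm_sub_rev,
      (isOfFinOrder_iff_pow_eq_one.2 ⟨p, hp.pos, hξ'⟩).norm_eq_one, div_one]
  rw [hnorm, ← Nat.cast_pred hp.pos]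
  refine Real.eq_rpow_neg_one_div_of_pow_eq_inv (norm_nonneg _) p.cast_nonneg
    (Nat.sub_ne_zero_of_lt hp.one_lt) ?_
  rw [hζ.norm_one_sub_pow_pred_of_prime, hpnorm, one_div]
end

section
/- Let k be a nonarchimedean normed field and let p be a prime number with ‖(p : k)‖ = 1/p. Let z₁ ∈ k and let ρ be a real number with 0 ≤ ρ < ‖z₁‖. Set ρ̂ = max(ρ^p, p^(−1)·ρ·‖z₁‖^(p−1)); equivalently, ρ̂ = p^(−1)·ρ·‖z₁‖^(p−1) if ρ ≤ ‖z₁‖·p^(−1/(p−1)), and ρ̂ = ρ^p if ρ ≥ ‖z₁‖·p^(−1/(p−1)). Then for every polynomial P ∈ k[T] one has η_{z₁,ρ}(P(T^p)) = η_{z₁^p, ρ̂}(P). (In Berkovich-theoretic terms: the map z ↦ z^p on the affine line sends the point η_{z₁,ρ} to the point η_{z₁^p, ρ̂}.) -/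
open Polynomial

/-- The Gauss seminorm `η_{a,r}` on `k[T]`: for `P = Σ cᵢ (T - a)^i`,
`η_{a,r}(P) = max_i ‖cᵢ‖ * r^i`.  (The coefficients of the Taylor expansion of
`P` at `a` are the coefficients of `Polynomial.taylor a P`.) -/
noncomputable def gaussSeminorm {k : Type*} [NormedField k] (a : k) (r : ℝ)
    (P : Polynomial k) : ℝ :=
  (Finset.range (P.natDegree + 1)).sup' Finset.nonempty_range_add_one
    fun i => ‖(Polynomial.taylor a P).coeff i‖ * r ^ i

/-!
Expanding at `z₁`, `P(T^p)` becomes `S(R)`, where `S` is the Taylor expansion of `P` at `z₁^p`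
and `R = (T + z₁)^p - z₁^p` is monic of degree `p` with no constant term. Since `p` divides the
middle binomial coefficients and `ρ ≤ ‖z₁‖`, the Gauss norm
`‖R‖_ρ = max(ρ^p, ‖p‖ ρ ‖z₁‖^(p-1))` is attained at the leading or at the linear coefficient
of `R`. The ultrametric inequality and submultiplicativity of Gauss norms give
`‖S(R)‖_ρ ≤ ‖S‖_{‖R‖_ρ}`. Conversely, let `i₀` be the last (leading case) or first (linear case)
index at which `‖S‖_{‖R‖_ρ}` is attained: then the coefficient of `T^(p i₀)` (resp. `T^i₀`)
in `S(R)` has a single dominant term, the one coming from `S.coeff i₀ * R ^ i₀`.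
-/

theorem norm_natCast_choose_le_of_prime {k : Type*} [NormedField k] [IsUltrametricDist k]
    {p j : ℕ} (hp : p.Prime) (hj0 : j ≠ 0) (hjp : j < p) :
    ‖(p.choose j : k)‖ ≤ ‖(p : k)‖ := by
  obtain ⟨t, ht⟩ := hp.dvd_choose_self hj0 hjp
  rw [ht, Nat.cast_mul, norm_mul]
  exact mul_le_of_le_one_right (norm_nonneg _) (IsUltrametricDist.norm_natCast_le_one k t)

namespace Polynomial

section Algebra

variable {A : Type*} [CommRing A]

theorem coeff_comp_eq_sum (S R : A[X]) (m : ℕ) :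
    (S.comp R).coeff m = ∑ i ∈ S.support, S.coeff i * (R ^ i).coeff m := by
  simp only [comp, eval₂_eq_sum, Polynomial.sum_def, finsetSum_coeff, coeff_C_mul]

theorem coeff_pow_eq_zero_of_lt {R : A[X]} (h0 : R.coeff 0 = 0) {n m : ℕ} (h : m < n) :
    (R ^ n).coeff m = 0 := by
  obtain ⟨Q, rfl⟩ := X_dvd_iff.mpr h0
  rw [mul_pow, coeff_X_pow_mul', if_neg h.not_ge]

theorem coeff_pow_self_of_coeff_zero {R : A[X]} (h0 : R.coeff 0 = 0) (n : ℕ) :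
    (R ^ n).coeff n = R.coeff 1 ^ n := by
  obtain ⟨Q, rfl⟩ := X_dvd_iff.mpr h0
  rw [mul_pow, coeff_X_pow_mul', if_pos le_rfl, Nat.sub_self, coeff_X_mul, coeff_zero_eq_eval_zero,
    coeff_zero_eq_eval_zero, eval_pow]

theorem taylor_comp (z : A) (P Q : A[X]) :
    taylor z (P.comp Q) = (taylor (Q.eval z) P).comp (taylor z Q - C (Q.eval z)) := by
  rw [taylor_apply, taylor_apply, taylor_apply, comp_assoc, comp_assoc, add_comp, X_comp, C_comp,
    sub_add_cancel]

theorem coeff_X_add_C_pow_sub_C_pow (z : A) (n : ℕ) {j : ℕ} (hj : j ≠ 0) :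
    ((X + C z) ^ n - C (z ^ n)).coeff j = z ^ (n - j) * n.choose j := by
  rw [coeff_sub, coeff_X_add_C_pow, coeff_C, if_neg hj, sub_zero]

theorem coeff_zero_X_add_C_pow_sub_C_pow (z : A) (n : ℕ) :
    ((X + C z) ^ n - C (z ^ n)).coeff 0 = 0 := by
  rw [coeff_sub, coeff_X_add_C_pow, coeff_C_zero, Nat.sub_zero, Nat.choose_zero_right, Nat.cast_one,
    mul_one, sub_self]

theorem natDegree_X_add_C_pow_sub_C_pow [Nontrivial A] (z : A) (n : ℕ) :
    ((X + C z) ^ n - C (z ^ n)).natDegree = n := by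
  rw [natDegree_sub_C, natDegree_pow_X_add_C]

theorem monic_X_add_C_pow_sub_C_pow [Nontrivial A] (z : A) {n : ℕ} (hn : n ≠ 0) :
    ((X + C z) ^ n - C (z ^ n)).Monic := by
  rw [Monic, leadingCoeff, natDegree_X_add_C_pow_sub_C_pow, coeff_X_add_C_pow_sub_C_pow z n hn,
    Nat.sub_self, pow_zero, Nat.choose_self, Nat.cast_one, one_mul]

end Algebra

section GaussNorm

variable {A : Type*} [CommRing A] {v : AbsoluteValue A ℝ} {r : ℝ}

theorem gaussNorm_eq_sup'_range (hr : 0 ≤ r) (F : A[X]) :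
    F.gaussNorm v r = (Finset.range (F.natDegree + 1)).sup' Finset.nonempty_range_add_one
      fun i => v (F.coeff i) * r ^ i := by
  refine le_antisymm ?_ (Finset.sup'_le _ _ fun i _ => F.le_gaussNorm v hr i)
  obtain ⟨i, hi⟩ := F.exists_eq_gaussNorm v r
  rw [hi]
  by_cases hiF : i ≤ F.natDegree
  · exact Finset.le_sup' (fun i => v (F.coeff i) * r ^ i) (by simpa [Nat.lt_succ_iff] using hiF)
  · rw [coeff_eq_zero_of_natDegree_lt (not_le.mp hiF), v.map_zero, zero_mul]
    exact Finset.le_sup'_of_le _ (Finset.mem_range.mpr F.natDegree.succ_pos) (by positivity)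

theorem gaussNorm_le_of_forall_le {F : A[X]} {B : ℝ} (h : ∀ i, v (F.coeff i) * r ^ i ≤ B) :
    F.gaussNorm v r ≤ B := by
  obtain ⟨i, hi⟩ := F.exists_eq_gaussNorm v r
  exact hi ▸ h i

theorem exists_max_eq_gaussNorm {F : A[X]} (h : 0 < F.gaussNorm v r) (hr : 0 ≤ r) :
    ∃ i, F.gaussNorm v r = v (F.coeff i) * r ^ i ∧
      ∀ j, i < j → v (F.coeff j) * r ^ j < F.gaussNorm v r := by
  classical
  set s := F.support.filter fun i => F.gaussNorm v r = v (F.coeff i) * r ^ i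
  have mem_s {i} (hi : F.gaussNorm v r = v (F.coeff i) * r ^ i) : i ∈ s := by
    refine Finset.mem_filter.mpr ⟨mem_support_iff.mpr fun h0 => ?_, hi⟩
    rw [h0, v.map_zero, zero_mul] at hi
    exact h.ne' hi
  obtain ⟨i, hi⟩ := F.exists_eq_gaussNorm v r
  have hs : s.Nonempty := ⟨i, mem_s hi⟩
  refine ⟨s.max' hs, (Finset.mem_filter.mp (s.max'_mem hs)).2, fun j hj => ?_⟩
  refine (F.le_gaussNorm v hr j).lt_of_ne fun hj' => ?_
  exact hj.not_ge (s.le_max' j (mem_s hj'.symm))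

theorem gaussNorm_pow_le [Nontrivial A] (hna : IsNonarchimedean v) (hr : 0 ≤ r) (F : A[X]) (n : ℕ) :
    (F ^ n).gaussNorm v r ≤ F.gaussNorm v r ^ n := by
  induction n with
  | zero => rw [pow_zero, pow_zero, ← C_1, gaussNorm_C, v.map_one]
  | succ n ih =>
    rw [pow_succ, pow_succ]
    exact (gaussNorm_mul_le v hna _ _ hr).trans
      (mul_le_mul_of_nonneg_right ih (F.gaussNorm_nonneg v hr))

theorem apply_mul_coeff_pow_le [Nontrivial A] (hna : IsNonarchimedean v) (hr : 0 ≤ r)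
    (R : A[X]) (a : A) (n m : ℕ) :
    v (a * (R ^ n).coeff m) * r ^ m ≤ v a * R.gaussNorm v r ^ n := by
  rw [v.map_mul, mul_assoc]
  gcongr
  exact ((R ^ n).le_gaussNorm v hr m).trans (gaussNorm_pow_le hna hr R n)

theorem gaussNorm_comp_le [Nontrivial A] (hna : IsNonarchimedean v) (hr : 0 ≤ r) (S R : A[X]) :
    (S.comp R).gaussNorm v r ≤ S.gaussNorm v (R.gaussNorm v r) := by
  refine gaussNorm_le_of_forall_le fun m => ?_
  obtain ⟨i, -, hi⟩ := hna.finset_image_add v.map_zero v.nonneg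
    (fun i => S.coeff i * (R ^ i).coeff m) S.support
  calc v ((S.comp R).coeff m) * r ^ m ≤ v (S.coeff i * (R ^ i).coeff m) * r ^ m := by
        rw [coeff_comp_eq_sum]; gcongr
    _ ≤ v (S.coeff i) * R.gaussNorm v r ^ i := apply_mul_coeff_pow_le hna hr R _ i m
    _ ≤ S.gaussNorm v (R.gaussNorm v r) := S.le_gaussNorm v (R.gaussNorm_nonneg v hr) i

theorem le_gaussNorm_comp_of_dominant (hna : IsNonarchimedean v) (hr : 0 ≤ r) {S R : A[X]}
    {B : ℝ} {i₀ m : ℕ} (hi₀ : v (S.coeff i₀ * (R ^ i₀).coeff m) * r ^ m = B)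
    (hlt : ∀ i ≠ i₀, v (S.coeff i * (R ^ i).coeff m) * r ^ m < B) :
    B ≤ (S.comp R).gaussNorm v r := by
  have hB : 0 < B := (hlt (i₀ + 1) (by omega)).trans_le' (by positivity)
  have hrm : 0 < r ^ m := (pow_nonneg hr m).lt_of_ne fun h => by
    rw [← h, mul_zero] at hi₀
    exact hB.ne hi₀
  have hmem : i₀ ∈ S.support := mem_support_iff.mpr fun h => by
    rw [h, zero_mul, v.map_zero, zero_mul] at hi₀
    exact hB.ne hi₀
  calc B = v ((S.comp R).coeff m) * r ^ m := by
        rw [coeff_comp_eq_sum, hna.apply_sum_eq_of_lt (fun a => (v.map_neg a).symm) hmem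
          fun i _ hi => lt_of_mul_lt_mul_right (hi₀ ▸ hlt i hi) hrm.le, hi₀]
    _ ≤ (S.comp R).gaussNorm v r := (S.comp R).le_gaussNorm v hr m

theorem gaussNorm_le_gaussNorm_comp_of_monic [Nontrivial A] (hna : IsNonarchimedean v)
    (hr : 0 ≤ r) {R : A[X]} (hR : R.Monic) (hd : 0 < R.natDegree)
    (htop : R.gaussNorm v r = r ^ R.natDegree) (S : A[X]) :
    S.gaussNorm v (R.gaussNorm v r) ≤ (S.comp R).gaussNorm v r := by
  rcases (S.gaussNorm_nonneg v (R.gaussNorm_nonneg v hr)).eq_or_lt with hzero | hpos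
  · exact hzero ▸ (S.comp R).gaussNorm_nonneg v hr
  obtain ⟨i₀, hi₀, hmax⟩ := exists_max_eq_gaussNorm hpos (R.gaussNorm_nonneg v hr)
  refine le_gaussNorm_comp_of_dominant hna hr (i₀ := i₀) (m := i₀ * R.natDegree) ?_ fun i hi => ?_
  · have hlead := (hR.pow i₀).coeff_natDegree
    rw [hR.natDegree_pow] at hlead
    rw [hlead, mul_one, hi₀, htop, ← pow_mul, mul_comm i₀]
  · rcases hi.lt_or_gt with hlt | hgt
    · rw [coeff_eq_zero_of_natDegree_lt (p := R ^ i) (by rw [hR.natDegree_pow]; gcongr), mul_zero,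
        v.map_zero, zero_mul]
      exact hpos
    · exact (apply_mul_coeff_pow_le hna hr R _ i _).trans_lt (hmax i hgt)

theorem gaussNorm_le_gaussNorm_comp_of_coeff_zero [Nontrivial A] (hna : IsNonarchimedean v)
    (hr : 0 ≤ r) {R : A[X]} (h0 : R.coeff 0 = 0) (hbot : R.gaussNorm v r = v (R.coeff 1) * r)
    (S : A[X]) :
    S.gaussNorm v (R.gaussNorm v r) ≤ (S.comp R).gaussNorm v r := by
  rcases (S.gaussNorm_nonneg v (R.gaussNorm_nonneg v hr)).eq_or_lt with hzero | hpos
  · exact hzero ▸ (S.comp R).gaussNorm_nonneg v hr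
  obtain ⟨i₀, hi₀, hmin⟩ := S.exists_min_eq_gaussNorm v (R.gaussNorm_nonneg v hr)
  refine le_gaussNorm_comp_of_dominant hna hr (i₀ := i₀) (m := i₀) ?_ fun i hi => ?_
  · rw [coeff_pow_self_of_coeff_zero h0, v.map_mul, map_pow, hi₀, hbot, mul_pow, mul_assoc]
  · rcases hi.lt_or_gt with hlt | hgt
    · exact (apply_mul_coeff_pow_le hna hr R _ i _).trans_lt (hmin i hlt)
    · rw [coeff_pow_eq_zero_of_lt h0 hgt, mul_zero, v.map_zero, zero_mul]
      exact hpos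

end GaussNorm

theorem norm_coeff_one_X_add_C_pow_sub_C_pow {k : Type*} [NormedField k] (z : k) (n : ℕ) :
    ‖((X + C z) ^ n - C (z ^ n)).coeff 1‖ = ‖(n : k)‖ * ‖z‖ ^ (n - 1) := by
  rw [coeff_X_add_C_pow_sub_C_pow z n one_ne_zero, Nat.choose_one_right, norm_mul, norm_pow,
    mul_comm]

theorem gaussNorm_X_add_C_pow_sub_C_pow {k : Type*} [NormedField k] [IsUltrametricDist k] {p : ℕ}
    (hp : p.Prime) {z : k} {ρ : ℝ} (hρ0 : 0 ≤ ρ) (hρ : ρ ≤ ‖z‖) :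
    ((X + C z) ^ p - C (z ^ p)).gaussNorm (NormedField.toAbsoluteValue k) ρ =
      max (ρ ^ p) (‖(p : k)‖ * ρ * ‖z‖ ^ (p - 1)) := by
  set R := (X + C z) ^ p - C (z ^ p)
  have hM : 0 ≤ max (ρ ^ p) (‖(p : k)‖ * ρ * ‖z‖ ^ (p - 1)) := le_max_of_le_left (by positivity)
  have hcoeff_top : ‖R.coeff p‖ = 1 := by
    rw [coeff_X_add_C_pow_sub_C_pow z p hp.ne_zero, Nat.sub_self, pow_zero, Nat.choose_self,
      Nat.cast_one, one_mul, norm_one]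
  refine le_antisymm (gaussNorm_le_of_forall_le fun j => ?_) (max_le ?_ ?_)
  · show ‖R.coeff j‖ * ρ ^ j ≤ _
    rcases Nat.eq_zero_or_pos j with rfl | hj0
    · rw [coeff_zero_X_add_C_pow_sub_C_pow, norm_zero, zero_mul]
      exact hM
    rcases lt_trichotomy j p with hjp | rfl | hpj
    · have hpow : ‖z‖ ^ (p - j) * ρ ^ j ≤ ρ * ‖z‖ ^ (p - 1) := by
        calc ‖z‖ ^ (p - j) * ρ ^ j = ρ * (‖z‖ ^ (p - j) * ρ ^ (j - 1)) := by
              rw [← pow_sub_one_mul hj0.ne']; ring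
          _ ≤ ρ * (‖z‖ ^ (p - j) * ‖z‖ ^ (j - 1)) := by gcongr
          _ = ρ * ‖z‖ ^ (p - 1) := by rw [← pow_add]; congr 2; omega
      calc ‖R.coeff j‖ * ρ ^ j = ‖(p.choose j : k)‖ * (‖z‖ ^ (p - j) * ρ ^ j) := by
            rw [coeff_X_add_C_pow_sub_C_pow z p hj0.ne', norm_mul, norm_pow]; ring
        _ ≤ ‖(p : k)‖ * (ρ * ‖z‖ ^ (p - 1)) := by
            gcongr
            exact norm_natCast_choose_le_of_prime hp hj0.ne' hjp
        _ ≤ _ := by rw [← mul_assoc]; exact le_max_right _ _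
    · rw [hcoeff_top, one_mul]
      exact le_max_left _ _
    · rw [coeff_eq_zero_of_natDegree_lt (by rwa [natDegree_X_add_C_pow_sub_C_pow]), norm_zero,
        zero_mul]
      exact hM
  · calc ρ ^ p = ‖R.coeff p‖ * ρ ^ p := by rw [hcoeff_top, one_mul]
      _ ≤ _ := R.le_gaussNorm (NormedField.toAbsoluteValue k) hρ0 p
  · rw [show ‖(p : k)‖ * ρ * ‖z‖ ^ (p - 1) = ‖R.coeff 1‖ * ρ ^ 1 by
      rw [norm_coeff_one_X_add_C_pow_sub_C_pow]; ring]
    exact R.le_gaussNorm (NormedField.toAbsoluteValue k) hρ0 1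

end Polynomial

theorem gaussSeminorm_eq_gaussNorm {k : Type*} [NormedField k] (a : k) {r : ℝ} (hr : 0 ≤ r)
    (P : k[X]) :
    gaussSeminorm a r P = (taylor a P).gaussNorm (NormedField.toAbsoluteValue k) r := by
  rw [gaussNorm_eq_sup'_range hr, natDegree_taylor]
  rfl

/-- **Image of the point `η_{z₁,ρ}` under `z ↦ z^p`.**
Let `k` be a nonarchimedean normed field, `p` prime with `‖(p : k)‖ = 1/p`,
`z₁ ∈ k` and `0 ≤ ρ < ‖z₁‖`.  Set `ρ̂ = max (ρ^p) (p⁻¹ * ρ * ‖z₁‖^(p-1))`.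
Then for every polynomial `P`, `η_{z₁,ρ}(P(T^p)) = η_{z₁^p, ρ̂}(P)`;
i.e. the map `z ↦ z^p` sends the Berkovich point `η_{z₁,ρ}` to `η_{z₁^p, ρ̂}`. -/
theorem gaussSeminorm_comp_pow_p
    {k : Type*} [NormedField k]
    (hna : ∀ x y : k, ‖x + y‖ ≤ max ‖x‖ ‖y‖)
    (p : ℕ) (hp : p.Prime) (hpnorm : ‖(p : k)‖ = 1 / p)
    (z₁ : k) (ρ : ℝ) (hρ0 : 0 ≤ ρ) (hρ : ρ < ‖z₁‖) :
    ∀ P : Polynomial k,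
      gaussSeminorm z₁ ρ (P.comp (X ^ p)) =
        gaussSeminorm (z₁ ^ p) (max (ρ ^ p) ((p : ℝ)⁻¹ * ρ * ‖z₁‖ ^ (p - 1))) P := by
  have : IsUltrametricDist k := .isUltrametricDist_of_forall_norm_add_le_max_norm hna
  have hv : IsNonarchimedean (NormedField.toAbsoluteValue k) := hna
  intro P
  set R : k[X] := (X + C z₁) ^ p - C (z₁ ^ p)
  have hR : R.gaussNorm (NormedField.toAbsoluteValue k) ρ =
      max (ρ ^ p) ((p : ℝ)⁻¹ * ρ * ‖z₁‖ ^ (p - 1)) := by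
    rw [gaussNorm_X_add_C_pow_sub_C_pow hp hρ0 hρ.le, hpnorm, one_div]
  have hcomp : taylor z₁ (P.comp (X ^ p)) = (taylor (z₁ ^ p) P).comp R := by
    rw [taylor_comp, taylor_X_pow, eval_pow, eval_X]
  rw [gaussSeminorm_eq_gaussNorm z₁ hρ0, hcomp, ← hR,
    gaussSeminorm_eq_gaussNorm _ (R.gaussNorm_nonneg _ hρ0)]
  refine le_antisymm (gaussNorm_comp_le hv hρ0 _ R) ?_
  rcases max_choice (ρ ^ p) ((p : ℝ)⁻¹ * ρ * ‖z₁‖ ^ (p - 1)) with htop | hbot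
  · refine gaussNorm_le_gaussNorm_comp_of_monic hv hρ0 (monic_X_add_C_pow_sub_C_pow z₁ hp.ne_zero)
      ?_ ?_ _
    · rw [natDegree_X_add_C_pow_sub_C_pow]
      exact hp.pos
    · rw [hR, htop, natDegree_X_add_C_pow_sub_C_pow]
  · refine gaussNorm_le_gaussNorm_comp_of_coeff_zero hv hρ0
      (coeff_zero_X_add_C_pow_sub_C_pow z₁ p) ?_ _
    rw [hR, hbot]
    show _ = ‖R.coeff 1‖ * ρ
    rw [norm_coeff_one_X_add_C_pow_sub_C_pow, hpnorm, one_div]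
    ring
end

section
/- Let G be a group and let V ≤ H be subgroups of G with n = [H : V] finite. Then for every g ∈ G: (a) if [V : V ∩ gVg⁻¹] = r is finite, then [H : H ∩ gHg⁻¹] is finite and [H : H ∩ gHg⁻¹] ≤ r·n; (b) if [H : H ∩ gHg⁻¹] = s is finite, then [V : V ∩ gVg⁻¹] is finite and [V : V ∩ gVg⁻¹] ≤ s·n. -/
/-!
Put `A = gVg⁻¹ ≤ B = gHg⁻¹`; conjugation preserves indices, so `[B : A] = [H : V] = n`.
(a) `A ∩ V` has index `[V : A ∩ V] · [H : V] = r n` in `H` and lies in `B`, so `[H : B ∩ H]`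
divides `r n`.
(b) `[V : A ∩ V] ≤ [H : A ∩ H] = [B ∩ H : A ∩ H] · [H : B ∩ H] ≤ [B : A] · s = n s`.
-/

/-- The conjugate subgroup `gKg⁻¹ = {g k g⁻¹ : k ∈ K}`. -/
def conjSubgroup {G : Type*} [Group G] (g : G) (K : Subgroup G) : Subgroup G :=
  K.map (MulAut.conj g).toMonoidHom

namespace Subgroup

variable {G : Type*} [Group G] {A B V H : Subgroup G}

theorem relIndex_dvd_relIndex_mul_relIndex (hAB : A ≤ B) (hVH : V ≤ H) :
    B.relIndex H ∣ A.relIndex V * V.relIndex H := by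
  have hprod : A.relIndex V * V.relIndex H = (A ⊓ V).relIndex H := by
    rw [← relIndex_inf_mul_relIndex, inf_of_le_left hVH]
  exact hprod ▸ relIndex_dvd_of_le_left H (inf_le_left.trans hAB)

theorem relIndex_le_relIndex_mul_relIndex (hAB : A ≤ B) (hA : A.relIndex B ≠ 0) (H : Subgroup G) :
    A.relIndex H ≤ A.relIndex B * B.relIndex H :=
  calc A.relIndex H = A.relIndex (B ⊓ H) * B.relIndex H := by
        rw [relIndex_inf_mul_relIndex, inf_of_le_left hAB]
    _ ≤ A.relIndex B * B.relIndex H :=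
        Nat.mul_le_mul_right _ (relIndex_le_of_le_right inf_le_left hA)

theorem relIndex_ne_zero_and_le_of_le (hAB : A ≤ B) (hVH : V ≤ H) (hA : A.relIndex B ≠ 0)
    (hB : B.relIndex H ≠ 0) :
    A.relIndex V ≠ 0 ∧ A.relIndex V ≤ A.relIndex B * B.relIndex H := by
  have hAH : A.relIndex H ≠ 0 := relIndex_ne_zero_trans hA hB
  exact ⟨mt (relIndex_eq_zero_of_le_right hVH) hAH,
    (relIndex_le_of_le_right hVH hAH).trans (relIndex_le_relIndex_mul_relIndex hAB hA H)⟩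

end Subgroup

theorem relIndex_conjSubgroup_conjSubgroup {G : Type*} [Group G] (g : G) (V H : Subgroup G) :
    (conjSubgroup g V).relIndex (conjSubgroup g H) = V.relIndex H :=
  Subgroup.relIndex_map_map_of_injective _ _ (MulAut.conj g).injective

/-- **Index estimates between a subgroup and a finite-index subgroup under conjugation.**
Let `V ≤ H` be subgroups of `G` with `n = [H : V]` finite.  For every `g ∈ G`:
(a) if `[V : V ∩ gVg⁻¹] = r` is finite, then `[H : H ∩ gHg⁻¹]` is finite and
`[H : H ∩ gHg⁻¹] ≤ r·n`;
(b) if `[H : H ∩ gHg⁻¹] = s` is finite, then `[V : V ∩ gVg⁻¹]` is finite and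
`[V : V ∩ gVg⁻¹] ≤ s·n`.
(Here, as in Mathlib, `A.relindex B` denotes the index `[B : A ∩ B]`, and an
index is finite iff it is nonzero.) -/
theorem conj_relindex_le_of_finite_relindex
    {G : Type*} [Group G] (V H : Subgroup G) (hVH : V ≤ H)
    (n : ℕ) (hn : V.relIndex H = n) (hn0 : n ≠ 0) (g : G) :
    (∀ r : ℕ, r ≠ 0 → (conjSubgroup g V).relIndex V = r →
        (conjSubgroup g H).relIndex H ≠ 0 ∧ (conjSubgroup g H).relIndex H ≤ r * n) ∧
    (∀ s : ℕ, s ≠ 0 → (conjSubgroup g H).relIndex H = s →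
        (conjSubgroup g V).relIndex V ≠ 0 ∧ (conjSubgroup g V).relIndex V ≤ s * n) := by
  have hAB : conjSubgroup g V ≤ conjSubgroup g H := Subgroup.map_mono hVH
  have hconj : (conjSubgroup g V).relIndex (conjSubgroup g H) = n := by
    rw [relIndex_conjSubgroup_conjSubgroup, hn]
  constructor
  · rintro r hr rfl
    have hdvd := Subgroup.relIndex_dvd_relIndex_mul_relIndex hAB hVH
    rw [hn] at hdvd
    have hrn : _ * n ≠ 0 := mul_ne_zero hr hn0
    exact ⟨ne_zero_of_dvd_ne_zero hrn hdvd, Nat.le_of_dvd (Nat.pos_of_ne_zero hrn) hdvd⟩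
  · rintro s hs rfl
    have h := Subgroup.relIndex_ne_zero_and_le_of_le hAB hVH (hconj ▸ hn0) hs
    rwa [hconj, mul_comm] at h
end

section
/- Let (V, B, ε, σ) be a connected, locally finite semi-graph and A an additive commutative group. Let b₁, b₂, b₃ ∈ B be three pairwise distinct open branches (σ bᵢ = bᵢ for i = 1, 2, 3) and let a, a' ∈ A. Then there exists a harmonic A-cochain f : B → A such that f(b₁) = a, f(b₂) = a', f(b₃) = −(a + a'), and f(b) = 0 for every open branch b not in {b₁, b₂, b₃}. -/
/-!
The cochain is the sum of two dipoles: `a` on `b₁` against `-a` on `b₃`, and `a'` on `b₂`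
against `-a'` on `b₃`. The point masses `c` on `b` and `-c` on `b'` have vertex sums `c` at
`ε b` and `-c` at `ε b'`. By connectedness this defect is cancelled by sending `c` back along a
walk from `ε b` to `ε b'`: each closed edge of the walk contributes `c` at one end and `-c` at
the other, so the vertex sums telescope, and open branches are never touched.
-/

theorem Fin.sum_univ_castSucc_sub_succ {A : Type*} [AddCommGroup A] {n : ℕ}
    (g : Fin (n + 1) → A) : ∑ t : Fin n, (g t.castSucc - g t.succ) = g 0 - g (Fin.last n) := by
  rw [Finset.sum_sub_distrib, sub_eq_sub_iff_add_eq_add, ← Fin.sum_univ_castSucc]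
  exact Fin.sum_univ_succ g

namespace SemiGraph

variable {V B A : Type*} [AddCommGroup A]

def alternatingCochains (σ : B → B) (A : Type*) [AddCommGroup A] : AddSubgroup (B → A) where
  carrier := {f | ∀ b, σ b ≠ b → f (σ b) = -f b}
  zero_mem' _ _ := neg_zero.symm
  add_mem' hf hg b hb := by simp only [Pi.add_apply, hf b hb, hg b hb, neg_add]
  neg_mem' hf b hb := by simp only [Pi.neg_apply, hf b hb]

noncomputable def vertexSum (ε : B → V) (hε : ∀ v, {b | ε b = v}.Finite) :
    (B → A) →+ (V → A) where
  toFun f v := ∑ᶠ b ∈ {b | ε b = v}, f b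
  map_zero' := by ext; simp
  map_add' f g := by ext v; exact finsum_mem_add_distrib (hε v)

section vertexSum

variable {ε : B → V} {hε : ∀ v, {b | ε b = v}.Finite}

theorem vertexSum_apply (f : B → A) (v : V) :
    vertexSum ε hε f v = ∑ᶠ b ∈ {b | ε b = v}, f b :=
  rfl

theorem vertexSum_single [DecidableEq B] [DecidableEq V] (b : B) (c : A) :
    vertexSum ε hε (Pi.single b c) = Pi.single (ε b) c := by
  ext v
  rw [vertexSum_apply, finsum_mem_eq_finite_toFinset_sum _ (hε v), Finset.sum_pi_single',
    Pi.single_apply]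
  simp [eq_comm]

end vertexSum

section involution

variable {σ : B → B}

theorem single_apply_involutive [DecidableEq B] (hσ : Function.Involutive σ) (e : B) (c : A)
    (x : B) : (Pi.single e c : B → A) (σ x) = (Pi.single (σ e) c : B → A) x := by
  simp only [Pi.single_apply, hσ.eq_iff]

theorem single_mem_alternatingCochains [DecidableEq B] (hσ : Function.Involutive σ) {b : B}
    (hb : σ b = b) (c : A) : Pi.single b c ∈ alternatingCochains σ A := by
  intro x hx
  have hxb : x ≠ b := by
    rintro rfl
    exact hx hb
  rw [single_apply_involutive hσ, hb, Pi.single_eq_of_ne hxb, neg_zero]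

def edgeCochain [DecidableEq B] (σ : B → B) (e : B) (c : A) : B → A :=
  Pi.single e c - Pi.single (σ e) c

theorem edgeCochain_apply_involutive [DecidableEq B] (hσ : Function.Involutive σ) (e : B)
    (c : A) (x : B) : edgeCochain σ e c (σ x) = -edgeCochain σ e c x := by
  simp only [edgeCochain, Pi.sub_apply, single_apply_involutive hσ, hσ e, neg_sub]

theorem edgeCochain_mem_alternatingCochains [DecidableEq B] (hσ : Function.Involutive σ)
    (e : B) (c : A) : edgeCochain σ e c ∈ alternatingCochains σ A :=
  fun x _ => edgeCochain_apply_involutive hσ e c x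

theorem edgeCochain_apply_of_fixed [DecidableEq B] (hσ : Function.Involutive σ) (e : B) (c : A)
    {x : B} (hx : σ x = x) : edgeCochain σ e c x = 0 := by
  rw [edgeCochain, Pi.sub_apply, ← single_apply_involutive hσ, hx, sub_self]

theorem vertexSum_edgeCochain [DecidableEq B] [DecidableEq V] {ε : B → V}
    {hε : ∀ v, {b | ε b = v}.Finite} (e : B) (c : A) :
    vertexSum ε hε (edgeCochain σ e c) = Pi.single (ε e) c - Pi.single (ε (σ e)) c := by
  rw [edgeCochain, map_sub, vertexSum_single, vertexSum_single]

end involution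

theorem exists_cochain_of_walk [DecidableEq V] (ε : B → V) (hε : ∀ v, {b | ε b = v}.Finite)
    {σ : B → B} (hσ : Function.Involutive σ) {n : ℕ} (vs : Fin (n + 1) → V) (es : Fin n → B)
    (hes : ∀ t, ε (es t) = vs t.castSucc) (hes' : ∀ t, ε (σ (es t)) = vs t.succ) (c : A) :
    ∃ g ∈ alternatingCochains σ A, (∀ x, σ x = x → g x = 0) ∧
      vertexSum ε hε g = Pi.single (vs 0) c - Pi.single (vs (Fin.last n)) c := by
  classical
  refine ⟨∑ t, edgeCochain σ (es t) c,
    AddSubgroup.sum_mem _ fun t _ => edgeCochain_mem_alternatingCochains hσ (es t) c,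
    fun x hx => ?_, ?_⟩
  · rw [Finset.sum_apply]
    exact Finset.sum_eq_zero fun t _ => edgeCochain_apply_of_fixed hσ (es t) c hx
  · simp only [map_sum, vertexSum_edgeCochain, hes, hes']
    exact Fin.sum_univ_castSucc_sub_succ fun i => (Pi.single (vs i) c : V → A)

theorem exists_dipole_cochain (ε : B → V) (hε : ∀ v, {b | ε b = v}.Finite) {σ : B → B}
    (hσ : Function.Involutive σ) [DecidableEq B] {b b' : B} (hb : σ b = b) (hb' : σ b' = b')
    (hwalk : ∃ (n : ℕ) (vs : Fin (n + 1) → V), vs 0 = ε b ∧ vs (Fin.last n) = ε b' ∧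
      ∀ t : Fin n, ∃ e : B, ε e = vs t.castSucc ∧ ε (σ e) = vs t.succ)
    (c : A) :
    ∃ g ∈ alternatingCochains σ A, vertexSum ε hε g = 0 ∧
      ∀ x, σ x = x → g x = (Pi.single b c : B → A) x - (Pi.single b' c : B → A) x := by
  classical
  obtain ⟨n, vs, hstart, hend, hstep⟩ := hwalk
  choose es hes hes' using hstep
  obtain ⟨g, hg, hg_fixed, hg_sum⟩ := exists_cochain_of_walk ε hε hσ vs es hes hes' c
  refine ⟨Pi.single b c - Pi.single b' c - g,
    sub_mem (sub_mem (single_mem_alternatingCochains hσ hb c)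
      (single_mem_alternatingCochains hσ hb' c)) hg, ?_, fun x hx => ?_⟩
  · rw [map_sub, map_sub, vertexSum_single, vertexSum_single, hg_sum, hstart, hend, sub_self]
  · rw [Pi.sub_apply, hg_fixed x hx, sub_zero, Pi.sub_apply]

end SemiGraph

open SemiGraph in
/-- **Existence of harmonic cochains with prescribed values on three open branches.**
Let `(V, B, ε, σ)` be a connected, locally finite semi-graph and `A` an additive
commutative group.  Let `b₁, b₂, b₃` be three pairwise distinct open branches
(`σ bᵢ = bᵢ`) and `a, a' ∈ A`.  Then there is a harmonic `A`-cochain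
`f : B → A` (i.e. `f (σ b) = - f b` for every branch of a closed edge and, at
every vertex `v`, the sum of `f` over the branches ending at `v` vanishes) with
`f b₁ = a`, `f b₂ = a'`, `f b₃ = -(a + a')`, and `f b = 0` for every open
branch `b ∉ {b₁, b₂, b₃}`. -/
theorem exists_harmonic_cochain_prescribed_on_three_open_branches
    {V B : Type*} (ε : B → V) (σ : B → B)
    (hσ : ∀ b, σ (σ b) = b)
    (hlocfin : ∀ v : V, {b : B | ε b = v}.Finite)
    (hconn : ∀ v w : V, ∃ (n : ℕ) (vs : Fin (n + 1) → V), vs 0 = v ∧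
        vs (Fin.last n) = w ∧
        ∀ t : Fin n, ∃ b : B, ε b = vs t.castSucc ∧ ε (σ b) = vs t.succ)
    {A : Type*} [AddCommGroup A]
    (b₁ b₂ b₃ : B) (h₁ : σ b₁ = b₁) (h₂ : σ b₂ = b₂) (h₃ : σ b₃ = b₃)
    (h₁₂ : b₁ ≠ b₂) (h₁₃ : b₁ ≠ b₃) (h₂₃ : b₂ ≠ b₃)
    (a a' : A) :
    ∃ f : B → A,
      (∀ b : B, σ b ≠ b → f (σ b) = - f b) ∧
      (∀ v : V, ∑ᶠ b ∈ {b : B | ε b = v}, f b = 0) ∧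
      f b₁ = a ∧ f b₂ = a' ∧ f b₃ = -(a + a') ∧
      (∀ b : B, σ b = b → b ∉ ({b₁, b₂, b₃} : Set B) → f b = 0) := by
  classical
  obtain ⟨g₁, hg₁, hsum₁, hval₁⟩ := exists_dipole_cochain ε hlocfin hσ h₁ h₃ (hconn _ _) a
  obtain ⟨g₂, hg₂, hsum₂, hval₂⟩ := exists_dipole_cochain ε hlocfin hσ h₂ h₃ (hconn _ _) a'
  refine ⟨g₁ + g₂, add_mem hg₁ hg₂, fun v => ?_, ?_, ?_, ?_, ?_⟩
  · rw [← vertexSum_apply (hε := hlocfin), map_add, hsum₁, hsum₂, add_zero, Pi.zero_apply]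
  · simp [hval₁ _ h₁, hval₂ _ h₁, h₁₂, h₁₃]
  · simp [hval₁ _ h₂, hval₂ _ h₂, h₁₂.symm, h₂₃]
  · simp [hval₁ _ h₃, hval₂ _ h₃, h₁₃.symm, h₂₃.symm, add_comm]
  · intro b hb hb_mem
    simp only [Set.mem_insert_iff, Set.mem_singleton_iff, not_or] at hb_mem
    simp [hval₁ _ hb, hval₂ _ hb, hb_mem]
end

section
/- Let I be a finite index type and for each i ∈ I let C_i be a Galois category; let C = ∏_{i ∈ I} C_i be the product category (its initial object is the family of the initial objects of the C_i, and coproducts are computed componentwise). An object X = (X_i)_{i ∈ I} of C is connected if and only if there exists exactly one index i₀ ∈ I such that X_{i₀} is not initial in C_{i₀}, and moreover X_{i₀} is a connected object of C_{i₀}. -/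
open CategoryTheory CategoryTheory.Limits

/-- An object of a category is *connected* if it is not initial and is not
isomorphic to a coproduct of two non-initial objects.  (The coproduct condition
is expressed via binary cofans together with colimit data, so that no
`HasBinaryCoproducts` instance is needed.) -/
def IsConnectedObj {C : Type*} [Category C] (X : C) : Prop :=
  (¬ Nonempty (IsInitial X)) ∧
  ∀ (Y₁ Y₂ : C) (c : BinaryCofan Y₁ Y₂), Nonempty (IsColimit c) →
    Nonempty (c.pt ≅ X) → Nonempty (IsInitial Y₁) ∨ Nonempty (IsInitial Y₂)

/-!
An object is connected iff it is not initial and every binary coproduct decomposition of it has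
an initial summand. In `∀ i, C i` initial objects and binary coproducts are componentwise, so a
decomposition of `X` is a family of decompositions of the `X i`. Splitting `X` along `{i₀}` and
its complement shows that a connected `X` has at most one non-initial component `X i₀`, and
padding a decomposition of `X i₀` by trivial ones elsewhere shows that `X i₀` is connected.
Conversely, initial objects of a Galois category are strict (an object is initial iff its fiber
is empty), so away from `i₀` both summands of a decomposition of `X` are initial, and a summand
is initial as soon as its `i₀`-component is.
-/

namespace CategoryTheory.PreGaloisCategory

instance GaloisCategory.hasStrictInitialObjects (E : Type*) [Category E] [GaloisCategory E] :
    HasStrictInitialObjects E where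
  out {I A} f hI := by
    let F := GaloisCategory.getFiberFunctor E
    have hFI : IsEmpty (F.obj I) := (initial_iff_fiber_empty F I).mp ⟨hI⟩
    obtain ⟨hA⟩ := (initial_iff_fiber_empty F A).mpr ⟨fun a => hFI.elim (F.map f a)⟩
    exact ⟨hI.to A, hA.hom_ext _ _, hI.hom_ext _ _⟩

end CategoryTheory.PreGaloisCategory

section Decomposition

variable {D : Type*} [Category D]

/-- Bundling the colimit property and the identification with `X` makes a family of
decompositions a plain dependent function, which can be updated at a single index. -/
structure CoprodDecomposition (X : D) where
  left : D
  right : D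
  cofan : BinaryCofan left right
  isColimit : IsColimit cofan
  iso : cofan.pt ≅ X

def IsIndecomposable (X : D) : Prop :=
  ∀ d : CoprodDecomposition X, Nonempty (IsInitial d.left) ∨ Nonempty (IsInitial d.right)

theorem isConnectedObj_iff_isIndecomposable (X : D) :
    IsConnectedObj X ↔ ¬ Nonempty (IsInitial X) ∧ IsIndecomposable X := by
  refine and_congr_right fun _ => ⟨fun h d => h _ _ d.cofan ⟨d.isColimit⟩ ⟨d.iso⟩, ?_⟩
  rintro h Y₁ Y₂ c ⟨hc⟩ ⟨e⟩
  exact h ⟨Y₁, Y₂, c, hc, e⟩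

namespace CoprodDecomposition

variable [HasInitial D]

noncomputable def leftTrivial (X : D) : CoprodDecomposition X where
  left := X
  right := ⊥_ D
  cofan := BinaryCofan.mk (𝟙 X) (initial.to X)
  isColimit := ((BinaryCofan.isColimit_iff_isIso_inl initialIsInitial _).mpr
    (inferInstanceAs (IsIso (𝟙 X)))).some
  iso := Iso.refl X

noncomputable def rightTrivial (X : D) : CoprodDecomposition X where
  left := ⊥_ D
  right := X
  cofan := BinaryCofan.mk (initial.to X) (𝟙 X)
  isColimit := ((BinaryCofan.isColimit_iff_isIso_inr initialIsInitial _).mpr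
    (inferInstanceAs (IsIso (𝟙 X)))).some
  iso := Iso.refl X

end CoprodDecomposition

end Decomposition

section Pi

variable {I : Type*} {C : I → Type*} [∀ i, Category (C i)] {X : ∀ i, C i}

namespace CategoryTheory.Limits

def IsInitial.pi (h : ∀ i, IsInitial (X i)) : IsInitial X :=
  IsInitial.ofUniqueHom (fun Y i => (h i).to (Y i)) fun _ _ => funext fun i => (h i).hom_ext _ _

noncomputable def IsInitial.eval [∀ i, HasInitial (C i)] (h : IsInitial X) (i : I) :
    IsInitial (X i) :=
  initialIsInitial.ofIso (Pi.isoApp ((IsInitial.pi fun _ => initialIsInitial).uniqueUpToIso h) i)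

def BinaryCofan.isColimitPi {A B : ∀ i, C i} (c : BinaryCofan A B)
    (h : ∀ i, IsColimit (BinaryCofan.mk (c.inl i) (c.inr i))) : IsColimit c :=
  BinaryCofan.IsColimit.mk c (fun f g i => BinaryCofan.IsColimit.desc (h i) (f i) (g i))
    (fun f g => funext fun i => BinaryCofan.IsColimit.inl_desc (h i) (f i) (g i))
    (fun f g => funext fun i => BinaryCofan.IsColimit.inr_desc (h i) (f i) (g i))
    fun f g _ hl hr => funext fun i => BinaryCofan.IsColimit.hom_ext (h i)
      ((congrFun hl i).trans (BinaryCofan.IsColimit.inl_desc (h i) (f i) (g i)).symm)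
      ((congrFun hr i).trans (BinaryCofan.IsColimit.inr_desc (h i) (f i) (g i)).symm)

noncomputable def BinaryCofan.isColimitEval [∀ i, HasBinaryCoproducts (C i)] {A B : ∀ i, C i}
    (c : BinaryCofan A B) (hc : IsColimit c) (i : I) :
    IsColimit (BinaryCofan.mk (c.inl i) (c.inr i)) := by
  let p : BinaryCofan A B := BinaryCofan.mk (P := fun i => A i ⨿ B i) (fun _ => coprod.inl)
    (fun _ => coprod.inr)
  let hp : IsColimit p := BinaryCofan.isColimitPi p fun i => coprodIsCoprod (A i) (B i)
  refine (coprodIsCoprod (A i) (B i)).ofIsoColimit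
    (BinaryCofan.ext (Pi.isoApp (hp.coconePointUniqueUpToIso hc) i) ?_ ?_)
  · exact congrFun (hp.comp_coconePointUniqueUpToIso_hom hc ⟨.left⟩) i
  · exact congrFun (hp.comp_coconePointUniqueUpToIso_hom hc ⟨.right⟩) i

end CategoryTheory.Limits

namespace CoprodDecomposition

noncomputable def pi (d : ∀ i, CoprodDecomposition (X i)) :
    CoprodDecomposition X where
  left i := (d i).left
  right i := (d i).right
  cofan := BinaryCofan.mk (P := fun i => (d i).cofan.pt) (fun i => (d i).cofan.inl)
    fun i => (d i).cofan.inr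
  isColimit := BinaryCofan.isColimitPi _ fun i =>
    (d i).isColimit.ofIsoColimit (isoBinaryCofanMk _)
  iso := Pi.isoMk fun i => (d i).iso

noncomputable def eval [∀ i, HasBinaryCoproducts (C i)] (d : CoprodDecomposition X) (i : I) :
    CoprodDecomposition (X i) where
  left := d.left i
  right := d.right i
  cofan := BinaryCofan.mk (d.cofan.inl i) (d.cofan.inr i)
  isColimit := BinaryCofan.isColimitEval d.cofan d.isColimit i
  iso := Pi.isoApp d.iso i

end CoprodDecomposition

open CoprodDecomposition

theorem IsIndecomposable.eval [∀ i, HasInitial (C i)] (hX : IsIndecomposable X) (i : I) :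
    IsIndecomposable (X i) := by
  classical
  intro d
  let e := CoprodDecomposition.pi (Function.update (fun j => leftTrivial (X j)) i d)
  have hleft : e.left i = d.left := by simp [e, CoprodDecomposition.pi]
  have hright : e.right i = d.right := by simp [e, CoprodDecomposition.pi]
  exact (hX e).imp (fun ⟨h⟩ => ⟨(h.eval i).ofIso (eqToIso hleft)⟩)
    fun ⟨h⟩ => ⟨(h.eval i).ofIso (eqToIso hright)⟩

theorem IsIndecomposable.nonempty_isInitial_of_ne [∀ i, HasInitial (C i)]
    (hX : IsIndecomposable X) {i₀ : I} (h₀ : ¬ Nonempty (IsInitial (X i₀))) {i : I}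
    (hi : i ≠ i₀) : Nonempty (IsInitial (X i)) := by
  classical
  let e := CoprodDecomposition.pi fun j =>
    if j = i₀ then leftTrivial (X j) else rightTrivial (X j)
  have hleft : e.left i₀ = X i₀ := by simp [e, CoprodDecomposition.pi, leftTrivial]
  have hright : e.right i = X i := by simp [e, CoprodDecomposition.pi, rightTrivial, hi]
  exact (hX e).elim (fun ⟨h⟩ => (h₀ ⟨(h.eval i₀).ofIso (eqToIso hleft)⟩).elim)
    fun ⟨h⟩ => ⟨(h.eval i).ofIso (eqToIso hright)⟩

theorem IsIndecomposable.pi_of_forall_ne_isInitial [∀ i, HasBinaryCoproducts (C i)]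
    [∀ i, HasStrictInitialObjects (C i)] {i₀ : I} (h₀ : IsIndecomposable (X i₀))
    (h : ∀ i ≠ i₀, Nonempty (IsInitial (X i))) : IsIndecomposable X := by
  intro d
  have hsummands (i : I) (hi : i ≠ i₀) :
      Nonempty (IsInitial (d.left i)) ∧ Nonempty (IsInitial (d.right i)) :=
    ⟨⟨(h i hi).some.ofStrict ((d.eval i).cofan.inl ≫ (d.eval i).iso.hom)⟩,
      ⟨(h i hi).some.ofStrict ((d.eval i).cofan.inr ≫ (d.eval i).iso.hom)⟩⟩
  refine (h₀ (d.eval i₀)).imp (fun ⟨h'⟩ => ⟨IsInitial.pi fun i => ?_⟩)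
    fun ⟨h'⟩ => ⟨IsInitial.pi fun i => ?_⟩
  · by_cases hi : i = i₀
    · subst hi; exact h'
    · exact (hsummands i hi).1.some
  · by_cases hi : i = i₀
    · subst hi; exact h'
    · exact (hsummands i hi).2.some

end Pi

theorem isConnectedObj_pi_iff_general
    {I : Type} (C : I → Type*) [∀ i, Category (C i)]
    [∀ i, GaloisCategory (C i)] (X : ∀ i, C i) :
    IsConnectedObj X ↔
      ∃ i₀ : I, IsConnectedObj (X i₀) ∧ ∀ i : I, i ≠ i₀ → Nonempty (IsInitial (X i)) := by
  simp only [isConnectedObj_iff_isIndecomposable]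
  constructor
  · rintro ⟨hX, hXind⟩
    obtain ⟨i₀, hi₀⟩ : ∃ i₀, ¬ Nonempty (IsInitial (X i₀)) := by
      by_contra! h
      exact hX ⟨IsInitial.pi fun i => (h i).some⟩
    exact ⟨i₀, ⟨hi₀, hXind.eval i₀⟩, fun _ hi => hXind.nonempty_isInitial_of_ne hi₀ hi⟩
  · rintro ⟨i₀, ⟨hi₀, hind⟩, h⟩
    exact ⟨fun ⟨hX⟩ => hi₀ ⟨hX.eval i₀⟩, hind.pi_of_forall_ne_isInitial h⟩

/-- **Connected objects of a finite product of Galois categories.**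
Let `I` be a finite index type, `Cᵢ` a Galois category for each `i ∈ I`, and
`C = ∏ᵢ Cᵢ` the product category.  An object `X = (Xᵢ)ᵢ` of `C` is connected if
and only if there is exactly one index `i₀` with `X i₀` not initial, and
moreover `X i₀` is a connected object of `C i₀`. -/
theorem isConnectedObj_pi_iff
    {I : Type} [Finite I] (C : I → Type*) [∀ i, Category (C i)]
    [∀ i, GaloisCategory (C i)] (X : ∀ i, C i) :
    IsConnectedObj X ↔
      ∃ i₀ : I, IsConnectedObj (X i₀) ∧ ∀ i : I, i ≠ i₀ → Nonempty (IsInitial (X i)) :=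
  isConnectedObj_pi_iff_general C X
end

section
/- Let I be a finite index type and for each i ∈ I let C_i be a Galois category; let C = ∏_{i ∈ I} C_i be the product category. Then every object X of C that is not initial is isomorphic to a finite coproduct ∐_{j=1}^{s} X_j of connected objects of C, and this decomposition is unique up to permutation and isomorphism of the factors: if (X_j)_{j ∈ J} and (Y_l)_{l ∈ L} are two finite families of connected objects of C with ∐_{j ∈ J} X_j ≅ ∐_{l ∈ L} Y_l, then there exists a bijection e : J ≃ L such that X_j ≅ Y_{e(j)} for every j ∈ J. -/
/-!
An object `X` of `∏ᵢ Cᵢ` is connected exactly when some component `X i₀` is connected and all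
other components are initial: a splitting `X i₁ ≅ Z₁ ⨿ Z₂` of one component extends to a
splitting of `X`.

Existence: the total fiber cardinality `∑ᵢ |Fᵢ(X i)|` is additive on binary coproducts and
vanishes only on initial objects, so repeatedly splitting non-connected objects terminates.

Uniqueness only needs that `Hom(A, -)` preserves finite coproducts for every summand `A`:
then `cf.inj j ≫ e.hom` factors through exactly one `cg.inj l`, and the factorizations in both
directions are mutually inverse. For a connected object of a Galois category this follows from
the disjointness of coproducts in the fibers, and for a connected `A` of the product it reduces
to `A i₀` because `Hom(A, Y) ≃ Hom(A i₀, Y i₀)`.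
-/

open CategoryTheory CategoryTheory.Limits

open Opposite PreGaloisCategory

universe w v u

theorem exists_isColimit_cofan_isConnectedObj {C : Type u} [Category.{v} C] (size : C → ℕ)
    (size_eq_add : ∀ {X Y₁ Y₂ : C} (v₁ : Y₁ ⟶ X) (v₂ : Y₂ ⟶ X),
      IsColimit (BinaryCofan.mk v₁ v₂) → size X = size Y₁ + size Y₂)
    (isInitial_of_size_eq_zero : ∀ X, size X = 0 → Nonempty (IsInitial X)) (X : C) :
    ∃ (ι : Type) (_ : Finite ι) (f : ι → C) (g : ∀ k, f k ⟶ X),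
      Nonempty (IsColimit (Cofan.mk X g)) ∧ ∀ k, IsConnectedObj (f k) := by
  induction hn : size X using Nat.strong_induction_on generalizing X with
  | _ n ih =>
  by_cases hX : IsConnectedObj X
  · exact ⟨Unit, inferInstance, fun _ => X, fun _ => 𝟙 X,
      ⟨Cofan.isColimitMkOfUnique (Iso.refl X) Unit⟩, fun _ => hX⟩
  by_cases hI : Nonempty (IsInitial X)
  · obtain ⟨hI⟩ := hI
    exact ⟨Empty, inferInstance, Empty.elim, fun k => k.elim,
      ⟨Cofan.IsColimit.mk _ (fun s => hI.to s.pt) (fun _ k => k.elim)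
        (fun _ _ _ => hI.hom_ext _ _)⟩, fun k => k.elim⟩
  unfold IsConnectedObj at hX
  push Not at hX
  obtain ⟨Y₁, Y₂, c, ⟨hc⟩, ⟨e⟩, hY₁, hY₂⟩ := hX (not_nonempty_iff.mp hI)
  have hc' : IsColimit (BinaryCofan.mk (c.inl ≫ e.hom) (c.inr ≫ e.hom)) :=
    hc.ofIsoColimit (Cocone.ext e (by rintro ⟨⟨⟩⟩ <;> rfl))
  have hsize : size X = size Y₁ + size Y₂ := size_eq_add _ _ hc'
  have h₁ : size Y₁ ≠ 0 := fun h => hY₁.false (isInitial_of_size_eq_zero _ h).some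
  have h₂ : size Y₂ ≠ 0 := fun h => hY₂.false (isInitial_of_size_eq_zero _ h).some
  obtain ⟨ι₁, _, f₁, g₁, ⟨hg₁⟩, hf₁⟩ := ih (size Y₁) (by omega) Y₁ rfl
  obtain ⟨ι₂, _, f₂, g₂, ⟨hg₂⟩, hf₂⟩ := ih (size Y₂) (by omega) Y₂ rfl
  exact ⟨ι₁ ⊕ ι₂, inferInstance, Sum.elim f₁ f₂, _, ⟨Cofan.combPairIsColimit hg₁ hg₂ hc'⟩,
    Sum.forall.2 ⟨hf₁, hf₂⟩⟩

namespace CategoryTheory.Limits.Cofan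

variable {C : Type u} [Category.{v} C]

section Coyoneda

variable {J : Type*} {f : J → C} {c : Cofan f} {A : C}
  [PreservesColimit (Discrete.functor f) (coyoneda.obj (Opposite.op A))]

variable (A) in
noncomputable def isColimitCoyoneda (hc : IsColimit c) :
    IsColimit (Cofan.mk _ fun j => (coyoneda.obj (Opposite.op A)).map (c.inj j)) :=
  isColimitMapCoconeEquiv _ f c (isColimitOfPreserves _ hc)

lemma exists_comp_inj_eq_of_preservesColimit (hc : IsColimit c) (u : A ⟶ c.pt) :
    ∃ j, ∃ v : A ⟶ f j, v ≫ c.inj j = u := by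
  obtain ⟨j, v, hv⟩ := inj_jointly_surjective_of_isColimit (isColimitCoyoneda A hc) u
  exact ⟨j, v, by simpa using hv⟩

lemma eq_of_comp_inj_eq_of_preservesColimit (hc : IsColimit c) {j j' : J} (v : A ⟶ f j)
    (v' : A ⟶ f j') (h : v ≫ c.inj j = v' ≫ c.inj j') : j = j' :=
  eq_of_inj_apply_eq_of_isColimit (isColimitCoyoneda A hc) v v' (by simpa using h)

lemma cancel_inj_of_preservesColimit (hc : IsColimit c) {j : J} (v v' : A ⟶ f j)
    (h : v ≫ c.inj j = v' ≫ c.inj j) : v = v' :=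
  inj_injective_of_isColimit (isColimitCoyoneda A hc) j (by simpa using h)

end Coyoneda

variable {J L : Type*} [Finite J] [Finite L] {f : J → C} {g : L → C} {cf : Cofan f}
  {cg : Cofan g} [∀ j, PreservesFiniteCoproducts (coyoneda.obj (Opposite.op (f j)))]
  [∀ l, PreservesFiniteCoproducts (coyoneda.obj (Opposite.op (g l)))]

lemma nonempty_iso_of_comp_inj_eq (hcf : IsColimit cf) (hcg : IsColimit cg)
    (e : cf.pt ≅ cg.pt) {j : J} {l : L} (v : f j ⟶ g l)
    (hv : v ≫ cg.inj l = cf.inj j ≫ e.hom) : Nonempty (f j ≅ g l) := by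
  obtain ⟨j', w, hw⟩ := exists_comp_inj_eq_of_preservesColimit hcf (cg.inj l ≫ e.inv)
  obtain rfl : j = j' :=
    eq_of_comp_inj_eq_of_preservesColimit hcf (𝟙 _) (v ≫ w) (by simp [hw, reassoc_of% hv])
  exact ⟨{ hom := v, inv := w
           hom_inv_id := cancel_inj_of_preservesColimit hcf _ _ (by simp [hw, reassoc_of% hv])
           inv_hom_id := cancel_inj_of_preservesColimit hcg _ _ (by simp [hv, reassoc_of% hw]) }⟩

theorem exists_equiv_of_iso (hcf : IsColimit cf) (hcg : IsColimit cg) (e : cf.pt ≅ cg.pt) :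
    ∃ σ : J ≃ L, ∀ j, Nonempty (f j ≅ g (σ j)) := by
  choose σ v hv using fun j => exists_comp_inj_eq_of_preservesColimit hcg (cf.inj j ≫ e.hom)
  choose τ w hw using fun l => exists_comp_inj_eq_of_preservesColimit hcf (cg.inj l ≫ e.inv)
  have hτσ (j : J) : τ (σ j) = j := eq_of_comp_inj_eq_of_preservesColimit hcf
    (v j ≫ w (σ j)) (𝟙 _) (by simp [hw, reassoc_of% hv])
  have hστ (l : L) : σ (τ l) = l := eq_of_comp_inj_eq_of_preservesColimit hcg
    (w l ≫ v (τ l)) (𝟙 _) (by simp [hv, reassoc_of% hw])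
  exact ⟨⟨σ, τ, hτσ, hστ⟩, fun j => nonempty_iso_of_comp_inj_eq hcf hcg e (v j) (hv j)⟩

end CategoryTheory.Limits.Cofan

namespace CategoryTheory.Pi

variable {I : Type w} {C : I → Type u} [∀ i, Category.{v} (C i)]

def isColimitOfIsColimitEval {K : Type*} [Category K] {F : K ⥤ ∀ i, C i} (c : Cocone F)
    (h : ∀ i, IsColimit ((Pi.eval C i).mapCocone c)) : IsColimit c where
  desc s i := (h i).desc ((Pi.eval C i).mapCocone s)
  fac _ k := funext fun i => (h i).fac _ k
  uniq s m hm := funext fun i =>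
    (h i).uniq ((Pi.eval C i).mapCocone s) (m i) fun k => congr_fun (hm k) i

instance preservesColimit_eval {K : Type*} [Category K] (F : K ⥤ ∀ i, C i)
    [∀ i, HasColimit (F ⋙ Pi.eval C i)] (i : I) : PreservesColimit F (Pi.eval C i) :=
  let c : Cocone F :=
    { pt := fun j => colimit (F ⋙ Pi.eval C j)
      ι := { app := fun k j => colimit.ι (F ⋙ Pi.eval C j) k
             naturality := fun _ _ φ => funext fun j =>
              (colimit.w (F ⋙ Pi.eval C j) φ).trans (Category.comp_id _).symm } }
  preservesColimit_of_preserves_colimit_cocone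
    (isColimitOfIsColimitEval c fun _ => colimit.isColimit _) (colimit.isColimit _)

instance preservesColimitsOfShape_eval {K : Type*} [Category K]
    [∀ i, HasColimitsOfShape K (C i)] (i : I) : PreservesColimitsOfShape K (Pi.eval C i) := {}

instance preservesFiniteCoproducts_eval [∀ i, HasFiniteCoproducts (C i)] (i : I) :
    PreservesFiniteCoproducts (Pi.eval C i) :=
  ⟨fun _ => inferInstance⟩

def isInitialOfIsInitialEval {X : ∀ i, C i} (h : ∀ i, IsInitial (X i)) : IsInitial X :=
  IsInitial.ofUniqueHom (fun Y i => (h i).to (Y i)) fun _ _ => funext fun i => (h i).hom_ext _ _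

def homEquivOfIsInitial [DecidableEq I] {X : ∀ i, C i} (i₀ : I)
    (hX : ∀ i ≠ i₀, IsInitial (X i)) (Y : ∀ i, C i) : (X ⟶ Y) ≃ (X i₀ ⟶ Y i₀) where
  toFun u := u i₀
  invFun v i := if h : i = i₀ then h ▸ v else (hX i h).to (Y i)
  left_inv u := funext fun i => by
    by_cases h : i = i₀
    · subst h; simp
    · simpa [h] using (hX i h).hom_ext _ _
  right_inv v := by simp

lemma preservesFiniteCoproducts_coyoneda_of_isInitial [∀ i, HasFiniteCoproducts (C i)]
    {X : ∀ i, C i} (i₀ : I) (hX : ∀ i ≠ i₀, Nonempty (IsInitial (X i)))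
    [PreservesFiniteCoproducts (coyoneda.obj (op (X i₀)))] :
    PreservesFiniteCoproducts (coyoneda.obj (op X)) := by
  classical
  let e : coyoneda.obj (op X) ≅ Pi.eval C i₀ ⋙ coyoneda.obj (op (X i₀)) ⋙ uliftFunctor.{w} :=
    NatIso.ofComponents fun Y =>
      ((homEquivOfIsInitial i₀ (fun i h => (hX i h).some) Y).trans Equiv.ulift.symm).toIso
  exact ⟨fun _ => preservesColimitsOfShape_of_natIso e.symm⟩

lemma exists_isColimit_binaryCofan_eval_eq [∀ i, HasInitial (C i)] (X : ∀ i, C i) (i₀ : I)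
    {Z₁ Z₂ : C i₀} (c : BinaryCofan Z₁ Z₂) (hc : IsColimit c) (e : c.pt ≅ X i₀) :
    ∃ (Y₁ Y₂ : ∀ i, C i) (c' : BinaryCofan Y₁ Y₂), Nonempty (IsColimit c') ∧
      Nonempty (c'.pt ≅ X) ∧ Y₁ i₀ = Z₁ ∧ Y₂ i₀ = Z₂ ∧ ∀ i ≠ i₀, Y₁ i = X i := by
  classical
  -- Updating families of objects *over* `X` changes a summand together with its map to `X`,
  -- so no transport along `i = i₀` is needed.
  let W₁ := Function.update (fun i => Over.mk (𝟙 (X i))) i₀ (Over.mk (c.inl ≫ e.hom))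
  let W₂ := Function.update (fun i => Over.mk (initial.to (X i))) i₀ (Over.mk (c.inr ≫ e.hom))
  have hW (i : I) : IsColimit (BinaryCofan.mk (W₁ i).hom (W₂ i).hom) := by
    by_cases h : i = i₀
    · subst h
      rw [show W₁ i = _ from Function.update_self .., show W₂ i = _ from Function.update_self ..]
      exact hc.ofIsoColimit (Cocone.ext e (by rintro ⟨⟨⟩⟩ <;> rfl))
    · rw [show W₁ i = _ from Function.update_of_ne h ..,
        show W₂ i = _ from Function.update_of_ne h ..]
      exact ((BinaryCofan.isColimit_iff_isIso_inl initialIsInitial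
        (BinaryCofan.mk (𝟙 (X i)) (initial.to (X i)))).mpr
        (inferInstanceAs (IsIso (𝟙 (X i))))).some
  refine ⟨fun i => (W₁ i).left, fun i => (W₂ i).left,
    BinaryCofan.mk (P := X) (fun i => (W₁ i).hom) (fun i => (W₂ i).hom),
    ⟨isColimitOfIsColimitEval _ fun i =>
      (isColimitMapCoconeBinaryCofanEquiv (Pi.eval C i) _ _).symm (hW i)⟩,
    ⟨Iso.refl X⟩, by simp [W₁], by simp [W₂], fun i h => by simp [W₁, h]⟩

end CategoryTheory.Pi

section Product

variable {I : Type w} {C : I → Type u} [∀ i, Category.{v} (C i)] [∀ i, HasInitial (C i)]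
  {X : ∀ i, C i}

lemma IsConnectedObj.isInitial_or_of_eval (hX : IsConnectedObj X) (i₀ : I) {Z₁ Z₂ : C i₀}
    (c : BinaryCofan Z₁ Z₂) (hc : IsColimit c) (e : c.pt ≅ X i₀) :
    (Nonempty (IsInitial Z₁) ∧ ∀ i ≠ i₀, Nonempty (IsInitial (X i))) ∨
      Nonempty (IsInitial Z₂) := by
  obtain ⟨Y₁, Y₂, c', hc', he', rfl, rfl, hY₁⟩ :=
    Pi.exists_isColimit_binaryCofan_eval_eq X i₀ c hc e
  rcases hX.2 Y₁ Y₂ c' hc' he' with h | h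
  · exact Or.inl ⟨⟨h.some.isInitialObj (Pi.eval C i₀)⟩, fun i hi =>
      ⟨(h.some.isInitialObj (Pi.eval C i)).ofIso (eqToIso (hY₁ i hi))⟩⟩
  · exact Or.inr ⟨h.some.isInitialObj (Pi.eval C i₀)⟩

lemma IsConnectedObj.exists_isConnectedObj_eval (hX : IsConnectedObj X) :
    ∃ i₀, IsConnectedObj (X i₀) ∧ ∀ i ≠ i₀, Nonempty (IsInitial (X i)) := by
  -- Split off the component at `i₁` using `X i₁ ≅ ⊥ ⨿ X i₁`.
  have hsplit (i₁ : I) :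
      (∀ i ≠ i₁, Nonempty (IsInitial (X i))) ∨ Nonempty (IsInitial (X i₁)) :=
    (hX.isInitial_or_of_eval i₁ (BinaryCofan.mk (initial.to (X i₁)) (𝟙 _))
      ((BinaryCofan.isColimit_iff_isIso_inr initialIsInitial _).mpr
        (inferInstanceAs (IsIso (𝟙 _)))).some (Iso.refl _)).imp_left And.right
  obtain ⟨i₀, hi₀⟩ : ∃ i₀, ¬ Nonempty (IsInitial (X i₀)) := by
    by_contra! h
    exact hX.1 ⟨Pi.isInitialOfIsInitialEval fun i => (h i).some⟩
  have hrest (i : I) (hi : i ≠ i₀) : Nonempty (IsInitial (X i)) :=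
    (hsplit i).resolve_left fun h => hi₀ (h i₀ hi.symm)
  refine ⟨i₀, ⟨hi₀, fun Z₁ Z₂ c ⟨hc⟩ ⟨e⟩ => ?_⟩, hrest⟩
  exact (hX.isInitial_or_of_eval i₀ c hc e).imp_left And.left

end Product

namespace CategoryTheory.PreGaloisCategory

variable {C : Type u} [Category.{v} C]

lemma _root_.IsConnectedObj.isConnected [PreGaloisCategory C] {A : C}
    (h : IsConnectedObj A) : IsConnected A where
  notInitial hA := h.1 ⟨hA⟩
  noTrivialComponent Y i _ hY := by
    obtain ⟨Z, u, ⟨hc⟩⟩ := monoInducesIsoOnDirectSummand i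
    rcases h.2 Y Z (BinaryCofan.mk i u) ⟨hc⟩ ⟨Iso.refl A⟩ with hY' | hZ
    · exact (hY hY'.some).elim
    · exact (BinaryCofan.isColimit_iff_isIso_inl hZ.some _).mp ⟨hc⟩

variable [GaloisCategory C]

lemma card_fiber_eq_add_of_isColimit (F : C ⥤ FintypeCat.{w}) [FiberFunctor F] {X Y₁ Y₂ : C}
    {v₁ : Y₁ ⟶ X} {v₂ : Y₂ ⟶ X} (hc : IsColimit (BinaryCofan.mk v₁ v₂)) :
    Nat.card (F.obj X) = Nat.card (F.obj Y₁) + Nat.card (F.obj Y₂) :=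
  (card_fiber_eq_of_iso F (hc.coconePointUniqueUpToIso (coprodIsCoprod Y₁ Y₂))).trans
    (card_fiber_coprod_eq_sum F Y₁ Y₂)

section Connected

variable {J : Type*} [Finite J] {f : J → C} {c : Cofan f} {A : C} [IsConnected A]

lemma exists_comp_inj_eq_of_isConnected (hc : IsColimit c) (u : A ⟶ c.pt) :
    ∃ j, ∃ v : A ⟶ f j, v ≫ c.inj j = u := by
  let F := GaloisCategory.getFiberFunctor C
  obtain ⟨a⟩ := nonempty_fiber_of_isConnected F A
  obtain ⟨⟨j⟩, z, hz⟩ := Concrete.isColimit_exists_rep _ (isColimitOfPreserves F hc) (F.map u a)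
  have : Mono (c.inj j) := MonoCoprod.mono_inj f c hc j
  let y := (fiberPullbackEquiv F u (c.inj j)).symm ⟨(a, z), hz.symm⟩
  have : IsIso (pullback.fst u (c.inj j)) :=
    IsConnected.noTrivialComponent _ _ (not_initial_of_inhabited F y)
  exact ⟨j, inv (pullback.fst u (c.inj j)) ≫ pullback.snd u (c.inj j), by
    rw [Category.assoc, ← pullback.condition, IsIso.inv_hom_id_assoc]⟩

lemma eq_of_comp_inj_eq_of_isConnected (hc : IsColimit c) {j j' : J} (v : A ⟶ f j)
    (v' : A ⟶ f j') (h : v ≫ c.inj j = v' ≫ c.inj j') : j = j' := by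
  let G := GaloisCategory.getFiberFunctor C ⋙ FintypeCat.incl
  obtain ⟨a⟩ := nonempty_fiber_of_isConnected (GaloisCategory.getFiberFunctor C) A
  refine Cofan.eq_of_inj_apply_eq_of_isColimit
    (Cofan.isColimitMapCoconeEquiv G f c (isColimitOfPreserves G hc)) (G.map v a) (G.map v' a) ?_
  have := congr_arg (fun w => G.map w a) h
  simp only [Functor.map_comp, ConcreteCategory.comp_apply] at this
  exact this

variable (f A) in
lemma preservesColimit_coyoneda_of_isConnected :
    PreservesColimit (Discrete.functor f) (coyoneda.obj (op A)) := by
  have hc := coproductIsCoproduct f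
  refine preservesColimit_of_preserves_colimit_cocone hc
    ((Cofan.isColimitMapCoconeEquiv _ f _).symm ?_)
  refine ((Cofan.nonempty_isColimit_iff_bijective_fromSigma _).2 ⟨?_, fun u => ?_⟩).some
  · rintro ⟨j, v⟩ ⟨j', v'⟩ h
    change v ≫ Sigma.ι f j = v' ≫ Sigma.ι f j' at h
    obtain rfl := eq_of_comp_inj_eq_of_isConnected hc v v' h
    have : Mono (Sigma.ι f j) := MonoCoprod.mono_inj f _ hc j
    rw [cancel_mono] at h
    rw [h]
  · obtain ⟨j, v, rfl⟩ := exists_comp_inj_eq_of_isConnected hc u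
    exact ⟨⟨j, v⟩, rfl⟩

end Connected

instance preservesFiniteCoproducts_coyoneda_of_isConnected (A : C) [IsConnected A] :
    PreservesFiniteCoproducts (coyoneda.obj (op A)) where
  preserves _ := ⟨fun {K} =>
    have := preservesColimit_coyoneda_of_isConnected (K.obj ∘ Discrete.mk) A
    preservesColimit_of_iso_diagram _ Discrete.natIsoFunctor.symm⟩

end CategoryTheory.PreGaloisCategory

namespace CategoryTheory.Pi

variable {I : Type w} [Fintype I] {C : I → Type u} [∀ i, Category.{v} (C i)]
  [∀ i, GaloisCategory (C i)]

noncomputable def fiberCard (X : ∀ i, C i) : ℕ :=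
  ∑ i, Nat.card ((GaloisCategory.getFiberFunctor (C i)).obj (X i))

lemma fiberCard_eq_add {X Y₁ Y₂ : ∀ i, C i} {v₁ : Y₁ ⟶ X} {v₂ : Y₂ ⟶ X}
    (hc : IsColimit (BinaryCofan.mk v₁ v₂)) : fiberCard X = fiberCard Y₁ + fiberCard Y₂ := by
  rw [fiberCard, fiberCard, fiberCard, ← Finset.sum_add_distrib]
  exact Finset.sum_congr rfl fun i _ => card_fiber_eq_add_of_isColimit _
    (isColimitMapCoconeBinaryCofanEquiv (Pi.eval C i) v₁ v₂ (isColimitOfPreserves _ hc))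

lemma isInitial_of_fiberCard_eq_zero {X : ∀ i, C i} (h : fiberCard X = 0) :
    Nonempty (IsInitial X) := by
  refine ⟨isInitialOfIsInitialEval fun i => Nonempty.some ?_⟩
  rw [initial_iff_fiber_empty (GaloisCategory.getFiberFunctor (C i)),
    ← Finite.card_eq_zero_iff]
  exact Finset.sum_eq_zero_iff.mp h i (Finset.mem_univ i)

end CategoryTheory.Pi

lemma IsConnectedObj.preservesFiniteCoproducts_coyoneda {I : Type w} {C : I → Type u}
    [∀ i, Category.{v} (C i)] [∀ i, GaloisCategory (C i)] {X : ∀ i, C i}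
    (hX : IsConnectedObj X) : PreservesFiniteCoproducts (coyoneda.obj (op X)) := by
  obtain ⟨i₀, hi₀, hX⟩ := hX.exists_isConnectedObj_eval
  have := hi₀.isConnected
  exact Pi.preservesFiniteCoproducts_coyoneda_of_isInitial i₀ hX

/-- **Decomposition into connected components in a finite product of Galois
categories.**  Let `I` be a finite index type, `Cᵢ` a Galois category for each
`i ∈ I`, and `C = ∏ᵢ Cᵢ`.  Every non-initial object `X` of `C` is isomorphic to
a finite coproduct of connected objects, and this decomposition is unique up to
permutation and isomorphism of the factors. -/
theorem pi_galois_decomposition_into_connected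
    {I : Type} [Finite I] (C : I → Type*) [∀ i, Category (C i)]
    [∀ i, GaloisCategory (C i)] :
    (∀ X : ∀ i, C i, ¬ Nonempty (IsInitial X) →
        ∃ (s : ℕ) (f : Fin s → ∀ i, C i) (c : Cofan f),
          (∀ j, IsConnectedObj (f j)) ∧ Nonempty (IsColimit c) ∧
            Nonempty (c.pt ≅ X)) ∧
    (∀ (J L : Type) (_ : Finite J) (_ : Finite L)
        (f : J → ∀ i, C i) (g : L → ∀ i, C i) (cf : Cofan f) (cg : Cofan g),
          (∀ j, IsConnectedObj (f j)) → (∀ l, IsConnectedObj (g l)) →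
          Nonempty (IsColimit cf) → Nonempty (IsColimit cg) →
          Nonempty (cf.pt ≅ cg.pt) →
          ∃ e : J ≃ L, ∀ j : J, Nonempty (f j ≅ g (e j))) := by
  have := Fintype.ofFinite I
  refine ⟨fun X _ => ?_, fun J L _ _ f g cf cg hf hg ⟨hcf⟩ ⟨hcg⟩ ⟨e⟩ => ?_⟩
  · obtain ⟨ι, _, f, g, ⟨hg⟩, hf⟩ := exists_isColimit_cofan_isConnectedObj Pi.fiberCard
      (fun _ _ => Pi.fiberCard_eq_add) (fun _ => Pi.isInitial_of_fiberCard_eq_zero) X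
    obtain ⟨s, ⟨ε⟩⟩ := Finite.exists_equiv_fin ι
    exact ⟨s, fun k => f (ε.symm k), Cofan.mk X fun k => g (ε.symm k), fun _ => hf _,
      ⟨Cofan.isColimitEquivOfEquiv ε.symm _ hg⟩, ⟨Iso.refl X⟩⟩
  · have := fun j => (hf j).preservesFiniteCoproducts_coyoneda
    have := fun l => (hg l).preservesFiniteCoproducts_coyoneda
    exact Cofan.exists_equiv_of_iso hcf hcg e
end
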